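/- arXiv:1608.07247 — 2 statements merged into one kernel-verified Lean document; each statement's English description precedes it below -/
import Mathlib

section
/- For every integer k ≥ 2, a_k(3) = 3(k - 1); that is, the minimum cardinality of a finite set S ⊆ ℤ×ℤ having exactly 3 patterns of length k is 3(k - 1). -/
open Finset Filter

/-- The four directions: horizontal, vertical and the two diagonals. -/
def Dirs : Finset (ℤ × ℤ) := {(1, 0), (0, 1), (1, 1), (1, -1)}

/-- `p` is the start of a pattern of length `k` of `S` in direction `d`:
`p + t • d ∈ S` for all `0 ≤ t < k`, while `p - d ∉ S` and `p + k • d ∉ S`. -/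
def IsPatternStart (S : Finset (ℤ × ℤ)) (k : ℕ) (d p : ℤ × ℤ) : Prop :=
  (∀ t : ℕ, t < k → p + (t : ℤ) • d ∈ S) ∧ p - d ∉ S ∧ p + (k : ℤ) • d ∉ S

/-- `P_k(S)`: the number of pairs `(d, p)` with `d ∈ Dirs` and `p` the start of a
pattern of length `k` of `S` in direction `d`. -/
noncomputable def patternCount (S : Finset (ℤ × ℤ)) (k : ℕ) : ℕ :=
  Set.ncard {dp : (ℤ × ℤ) × (ℤ × ℤ) | dp.1 ∈ Dirs ∧ IsPatternStart S k dp.1 dp.2}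

/-- `a_k(n)`: the minimum cardinality of a finite `S ⊆ ℤ × ℤ` with exactly `n`
patterns of length `k`. -/
noncomputable def minPoints (k n : ℕ) : ℕ :=
  sInf {c | ∃ S : Finset (ℤ × ℤ), patternCount S k = n ∧ S.card = c}

/-! ### Auxiliary material -/

lemma mem_Dirs_iff (d : ℤ × ℤ) :
    d ∈ Dirs ↔ d = (1, 0) ∨ d = (0, 1) ∨ d = (1, 1) ∨ d = (1, -1) := by
  simp [Dirs]

/-- The boundary of the lattice triangle with corners `(0,0)`, `(k-1,0)`, `(0,k-1)`. -/
def Tri (k : ℕ) : Finset (ℤ × ℤ) :=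
  ((Finset.range k).image fun i : ℕ => ((i : ℤ), 0)) ∪
  ((Finset.range (k - 1)).image fun j : ℕ => ((0 : ℤ), (j : ℤ) + 1)) ∪
  ((Finset.range (k - 2)).image fun i : ℕ => ((i : ℤ) + 1, (k : ℤ) - 1 - ((i : ℤ) + 1)))

lemma mem_Tri (k : ℕ) (hk : 2 ≤ k) (q : ℤ × ℤ) :
    q ∈ Tri k ↔ 0 ≤ q.1 ∧ 0 ≤ q.2 ∧ q.1 + q.2 ≤ (k : ℤ) - 1 ∧
      (q.1 = 0 ∨ q.2 = 0 ∨ q.1 + q.2 = (k : ℤ) - 1) := by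
  obtain ⟨x, y⟩ := q
  simp only [Tri, Finset.mem_union, Finset.mem_image, Finset.mem_range, Prod.mk.injEq]
  constructor
  · rintro ((⟨i, hi, rfl, rfl⟩ | ⟨j, hj, rfl, rfl⟩) | ⟨i, hi, rfl, rfl⟩) <;> omega
  · rintro ⟨hx, hy, hs, (h | h | h)⟩
    · by_cases hy0 : y = 0
      · exact Or.inl (Or.inl ⟨0, by omega, by omega, by omega⟩)
      · exact Or.inl (Or.inr ⟨(y - 1).toNat, by omega, by omega, by omega⟩)
    · exact Or.inl (Or.inl ⟨x.toNat, by omega, by omega, by omega⟩)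
    · by_cases hx0 : x = 0
      · exact Or.inl (Or.inr ⟨(y - 1).toNat, by omega, by omega, by omega⟩)
      · by_cases hy0 : y = 0
        · exact Or.inl (Or.inl ⟨x.toNat, by omega, by omega, by omega⟩)
        · exact Or.inr ⟨(x - 1).toNat, by omega, by omega, by omega⟩

lemma card_Tri (k : ℕ) (hk : 2 ≤ k) : (Tri k).card = 3 * (k - 1) := by
  have h1 : ((Finset.range k).image fun i : ℕ => ((i : ℤ), (0 : ℤ))).card = k := by
    rw [Finset.card_image_of_injective, Finset.card_range]
    intro a b h
    simp only [Prod.mk.injEq] at h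
    omega
  have h2 : ((Finset.range (k - 1)).image fun j : ℕ => ((0 : ℤ), (j : ℤ) + 1)).card = k - 1 := by
    rw [Finset.card_image_of_injective, Finset.card_range]
    intro a b h
    simp only [Prod.mk.injEq] at h
    omega
  have h3 : ((Finset.range (k - 2)).image fun i : ℕ => ((i : ℤ) + 1, (k : ℤ) - 1 - ((i : ℤ) + 1))).card
      = k - 2 := by
    rw [Finset.card_image_of_injective, Finset.card_range]
    intro a b h
    simp only [Prod.mk.injEq] at h
    omega
  have d1 : Disjoint ((Finset.range k).image fun i : ℕ => ((i : ℤ), 0))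
      ((Finset.range (k - 1)).image fun j : ℕ => ((0 : ℤ), (j : ℤ) + 1)) := by
    rw [Finset.disjoint_left]
    rintro ⟨x, y⟩ h1 h2
    simp only [Finset.mem_image, Finset.mem_range, Prod.mk.injEq] at h1 h2
    obtain ⟨i, _, _, rfl⟩ := h1
    obtain ⟨j, _, _, hj⟩ := h2
    omega
  have d2 : Disjoint (((Finset.range k).image fun i : ℕ => ((i : ℤ), 0)) ∪
      ((Finset.range (k - 1)).image fun j : ℕ => ((0 : ℤ), (j : ℤ) + 1)))
      ((Finset.range (k - 2)).image fun i : ℕ => ((i : ℤ) + 1, (k : ℤ) - 1 - ((i : ℤ) + 1))) := by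
    rw [Finset.disjoint_left]
    rintro ⟨x, y⟩ h1 h2
    simp only [Finset.mem_union, Finset.mem_image, Finset.mem_range, Prod.mk.injEq] at h1 h2
    obtain ⟨i, hi, rfl, hy⟩ := h2
    rcases h1 with ⟨j, _, hj, hj2⟩ | ⟨j, _, hj, hj2⟩ <;> omega
  rw [Tri, Finset.card_union_of_disjoint d2, Finset.card_union_of_disjoint d1]
  omega

lemma patternStart_Tri_iff (k : ℕ) (hk : 2 ≤ k) (d p : ℤ × ℤ) (hd : d ∈ Dirs) :
    IsPatternStart (Tri k) k d p ↔
      (d = (1, 0) ∧ p = (0, 0)) ∨ (d = (0, 1) ∧ p = (0, 0)) ∨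
      (d = (1, -1) ∧ p = (0, (k : ℤ) - 1)) := by
  have hm : (1 : ℤ) ≤ (k : ℤ) - 1 := by omega
  constructor
  · rintro ⟨hall, hpre, hpost⟩
    have h0 := hall 0 (by omega)
    have h1 := hall (k - 1) (by omega)
    rw [mem_Tri k hk] at h0 h1
    have hc : ((k - 1 : ℕ) : ℤ) = (k : ℤ) - 1 := by omega
    rw [hc] at h1
    rcases (mem_Dirs_iff d).mp hd with rfl | rfl | rfl | rfl
    · refine Or.inl ⟨rfl, ?_⟩
      obtain ⟨a, b⟩ := p
      simp only [Prod.smul_mk, smul_eq_mul, Prod.mk_add_mk, Prod.mk.injEq] at h0 h1 ⊢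
      constructor <;> omega
    · refine Or.inr (Or.inl ⟨rfl, ?_⟩)
      obtain ⟨a, b⟩ := p
      simp only [Prod.smul_mk, smul_eq_mul, Prod.mk_add_mk, Prod.mk.injEq] at h0 h1 ⊢
      constructor <;> omega
    · exfalso
      obtain ⟨a, b⟩ := p
      simp only [Prod.smul_mk, smul_eq_mul, Prod.mk_add_mk, Prod.mk.injEq] at h0 h1
      omega
    · refine Or.inr (Or.inr ⟨rfl, ?_⟩)
      obtain ⟨a, b⟩ := p
      simp only [Prod.smul_mk, smul_eq_mul, Prod.mk_add_mk, Prod.mk.injEq] at h0 h1 ⊢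
      constructor <;> omega
  · rintro (⟨rfl, rfl⟩ | ⟨rfl, rfl⟩ | ⟨rfl, rfl⟩) <;>
      refine ⟨fun t ht => ?_, ?_, ?_⟩ <;>
      simp only [mem_Tri k hk, Prod.smul_mk, smul_eq_mul, Prod.mk_add_mk, Prod.mk_sub_mk,
        Prod.fst, Prod.snd] <;> omega

lemma patternCount_Tri (k : ℕ) (hk : 2 ≤ k) : patternCount (Tri k) k = 3 := by
  unfold patternCount
  have hset : {dp : (ℤ × ℤ) × (ℤ × ℤ) | dp.1 ∈ Dirs ∧ IsPatternStart (Tri k) k dp.1 dp.2} =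
      {(((1 : ℤ), (0 : ℤ)), ((0 : ℤ), (0 : ℤ))), (((0 : ℤ), (1 : ℤ)), ((0 : ℤ), (0 : ℤ))),
       (((1 : ℤ), (-1 : ℤ)), ((0 : ℤ), (k : ℤ) - 1))} := by
    ext ⟨d, p⟩
    simp only [Set.mem_setOf_eq, Set.mem_insert_iff, Set.mem_singleton_iff, Prod.mk.injEq]
    constructor
    · rintro ⟨hd, hs⟩
      rcases (patternStart_Tri_iff k hk d p hd).mp hs with ⟨rfl, rfl⟩ | ⟨rfl, rfl⟩ | ⟨rfl, rfl⟩
      · exact Or.inl ⟨rfl, rfl⟩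
      · exact Or.inr (Or.inl ⟨rfl, rfl⟩)
      · exact Or.inr (Or.inr ⟨rfl, rfl⟩)
    · rintro (⟨rfl, rfl⟩ | ⟨rfl, rfl⟩ | ⟨rfl, rfl⟩) <;>
        refine ⟨by simp [Dirs], (patternStart_Tri_iff k hk _ _ (by simp [Dirs])).mpr ?_⟩
      · exact Or.inl ⟨rfl, rfl⟩
      · exact Or.inr (Or.inl ⟨rfl, rfl⟩)
      · exact Or.inr (Or.inr ⟨rfl, rfl⟩)
  rw [hset]
  rw [Set.ncard_eq_three]
  refine ⟨_, _, _, ?_, ?_, ?_, rfl⟩ <;> simp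

/-- The run of `k` points starting at `p` in direction `d`. -/
def run (k : ℕ) (d p : ℤ × ℤ) : Finset (ℤ × ℤ) :=
  (Finset.range k).image fun t : ℕ => p + (t : ℤ) • d

lemma dirs_ne_zero {d : ℤ × ℤ} (hd : d ∈ Dirs) : d.1 ≠ 0 ∨ d.2 ≠ 0 := by
  rcases (mem_Dirs_iff d).mp hd with rfl | rfl | rfl | rfl <;> simp

lemma card_run (k : ℕ) {d : ℤ × ℤ} (p : ℤ × ℤ) (hd : d ∈ Dirs) : (run k d p).card = k := by
  rw [run, Finset.card_image_of_injOn, Finset.card_range]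
  intro s _ t _ h
  have h2 : (s : ℤ) • d = (t : ℤ) • d := add_left_cancel h
  rw [Prod.ext_iff] at h2
  simp only [Prod.smul_fst, Prod.smul_snd, smul_eq_mul] at h2
  rcases dirs_ne_zero hd with h3 | h3
  · have := mul_right_cancel₀ h3 h2.1
    exact_mod_cast this
  · have := mul_right_cancel₀ h3 h2.2
    exact_mod_cast this

lemma run_subset {S : Finset (ℤ × ℤ)} {k : ℕ} {d p : ℤ × ℤ}
    (hs : IsPatternStart S k d p) : run k d p ⊆ S := by
  intro q hq
  rw [run, Finset.mem_image] at hq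
  obtain ⟨t, ht, rfl⟩ := hq
  exact hs.1 t (Finset.mem_range.mp ht)

lemma indep {d1 d2 : ℤ × ℤ} (h1 : d1 ∈ Dirs) (h2 : d2 ∈ Dirs) (hne : d1 ≠ d2)
    {a b : ℤ} (h : a • d1 = b • d2) : a = 0 ∧ b = 0 := by
  rcases (mem_Dirs_iff d1).mp h1 with rfl | rfl | rfl | rfl <;>
    rcases (mem_Dirs_iff d2).mp h2 with rfl | rfl | rfl | rfl <;>
    first
      | exact absurd rfl hne
      | (simp only [Prod.smul_mk, smul_eq_mul, Prod.mk.injEq] at h; omega)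

lemma run_inter_card {S : Finset (ℤ × ℤ)} {k : ℕ} (hk : 2 ≤ k) {d1 p1 d2 p2 : ℤ × ℤ}
    (hd1 : d1 ∈ Dirs) (hd2 : d2 ∈ Dirs)
    (hs1 : IsPatternStart S k d1 p1) (hs2 : IsPatternStart S k d2 p2)
    (hne : (d1, p1) ≠ (d2, p2)) : (run k d1 p1 ∩ run k d2 p2).card ≤ 1 := by
  rw [Finset.card_le_one]
  rintro a ha b hb
  rw [Finset.mem_inter, run, run, Finset.mem_image, Finset.mem_image] at ha hb
  obtain ⟨⟨t1, ht1, hat1⟩, s1, hs1', has1⟩ := ha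
  obtain ⟨⟨t2, ht2, hbt2⟩, s2, hs2', hbs2⟩ := hb
  rw [Finset.mem_range] at ht1 ht2 hs1' hs2'
  by_cases hdd : d1 = d2
  · subst hdd
    -- runs in the same direction are disjoint unless p1 = p2
    have hpp : p1 ≠ p2 := fun h => hne (by rw [h])
    exfalso
    have heq : p1 + (t1 : ℤ) • d1 = p2 + (s1 : ℤ) • d1 := by rw [hat1, has1]
    rcases lt_trichotomy t1 s1 with hlt | heq' | hlt
    · apply hs2.2.2
      have hkey : p2 + (k : ℤ) • d1 = p1 + (((k + t1 - s1 : ℕ)) : ℤ) • d1 := by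
        have hc : (((k + t1 - s1 : ℕ)) : ℤ) = (t1 : ℤ) - s1 + k := by omega
        rw [hc, eq_sub_of_add_eq heq.symm]
        module
      rw [hkey]
      exact hs1.1 _ (by omega)
    · subst heq'
      exact hpp (add_right_cancel heq)
    · apply hs2.2.1
      have hkey : p2 - d1 = p1 + (((t1 - s1 - 1 : ℕ)) : ℤ) • d1 := by
        have hc : (((t1 - s1 - 1 : ℕ)) : ℤ) = (t1 : ℤ) - s1 - 1 := by omega
        rw [hc, eq_sub_of_add_eq heq.symm]
        module
      rw [hkey]
      exact hs1.1 _ (by omega)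
  · -- different directions: intersection of two non-parallel lines
    have heq1 : p1 + (t1 : ℤ) • d1 = p2 + (s1 : ℤ) • d2 := by rw [hat1, has1]
    have heq2 : p1 + (t2 : ℤ) • d1 = p2 + (s2 : ℤ) • d2 := by rw [hbt2, hbs2]
    have hdiff : ((t1 : ℤ) - t2) • d1 = ((s1 : ℤ) - s2) • d2 := by
      have h3 : p1 + (t1 : ℤ) • d1 - (p1 + (t2 : ℤ) • d1) =
          p2 + (s1 : ℤ) • d2 - (p2 + (s2 : ℤ) • d2) := by rw [heq1, heq2]
      calc ((t1 : ℤ) - t2) • d1 = p1 + (t1 : ℤ) • d1 - (p1 + (t2 : ℤ) • d1) := by module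
        _ = p2 + (s1 : ℤ) • d2 - (p2 + (s2 : ℤ) • d2) := h3
        _ = ((s1 : ℤ) - s2) • d2 := by module
    have h0 := indep hd1 hd2 hdd hdiff
    have ht : t1 = t2 := by omega
    rw [← hat1, ← hbt2, ht]

lemma lower_bound (k : ℕ) (hk : 2 ≤ k) (S : Finset (ℤ × ℤ))
    (h : patternCount S k = 3) : 3 * (k - 1) ≤ S.card := by
  rw [patternCount, Set.ncard_eq_three] at h
  obtain ⟨a, b, c, hab, hac, hbc, hT⟩ := h
  have ha : a.1 ∈ Dirs ∧ IsPatternStart S k a.1 a.2 := by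
    have : a ∈ {dp : (ℤ × ℤ) × (ℤ × ℤ) | dp.1 ∈ Dirs ∧ IsPatternStart S k dp.1 dp.2} := by
      rw [hT]; simp
    exact this
  have hb : b.1 ∈ Dirs ∧ IsPatternStart S k b.1 b.2 := by
    have : b ∈ {dp : (ℤ × ℤ) × (ℤ × ℤ) | dp.1 ∈ Dirs ∧ IsPatternStart S k dp.1 dp.2} := by
      rw [hT]; simp
    exact this
  have hc : c.1 ∈ Dirs ∧ IsPatternStart S k c.1 c.2 := by
    have : c ∈ {dp : (ℤ × ℤ) × (ℤ × ℤ) | dp.1 ∈ Dirs ∧ IsPatternStart S k dp.1 dp.2} := by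
      rw [hT]; simp
    exact this
  set A := run k a.1 a.2 with hA
  set B := run k b.1 b.2 with hB
  set C := run k c.1 c.2 with hC
  have cardA : A.card = k := card_run k a.2 ha.1
  have cardB : B.card = k := card_run k b.2 hb.1
  have cardC : C.card = k := card_run k c.2 hc.1
  have iAB : (A ∩ B).card ≤ 1 :=
    run_inter_card hk ha.1 hb.1 ha.2 hb.2 (by simpa using hab)
  have iAC : (A ∩ C).card ≤ 1 :=
    run_inter_card hk ha.1 hc.1 ha.2 hc.2 (by simpa using hac)
  have iBC : (B ∩ C).card ≤ 1 :=
    run_inter_card hk hb.1 hc.1 hb.2 hc.2 (by simpa using hbc)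
  have e1 : (A ∪ B).card + (A ∩ B).card = A.card + B.card :=
    Finset.card_union_add_card_inter A B
  have e2 : (A ∪ B ∪ C).card + ((A ∪ B) ∩ C).card = (A ∪ B).card + C.card :=
    Finset.card_union_add_card_inter (A ∪ B) C
  have e4 : ((A ∪ B) ∩ C).card ≤ (A ∩ C).card + (B ∩ C).card := by
    rw [Finset.union_inter_distrib_right]
    exact Finset.card_union_le _ _
  have e5 : (A ∪ B ∪ C).card ≤ S.card := by
    apply Finset.card_le_card
    intro x hx
    rcases Finset.mem_union.mp hx with hx | hx
    · rcases Finset.mem_union.mp hx with hx | hx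
      · exact run_subset ha.2 hx
      · exact run_subset hb.2 hx
    · exact run_subset hc.2 hx
  omega

theorem stmt2 (k : ℕ) (hk : 2 ≤ k) : minPoints k 3 = 3 * (k - 1) := by
  have hmem : 3 * (k - 1) ∈ {c | ∃ S : Finset (ℤ × ℤ), patternCount S k = 3 ∧ S.card = c} :=
    ⟨Tri k, patternCount_Tri k hk, card_Tri k hk⟩
  refine le_antisymm (Nat.sInf_le hmem) (le_csInf ⟨_, hmem⟩ ?_)
  rintro c ⟨S, hS, rfl⟩
  exact lower_bound k hk S hS
end

section
/- For every integer k ≥ 2, there exists a real number L such that a_k(n)/n converges to L as n → ∞, and L satisfies k/4 ≤ L ≤ k/3. -/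
/-!
The `k` points of a pattern lie in `S`, and two patterns of `S` in the same direction share no
point, so `k * P_k(S) ≤ 4 * |S|`, whence `a_k(n) ≥ k n / 4`. Conversely, a rectangle `k` wide and
`m > k` tall has `3 m + 2 - 2 k` patterns (its rows and two families of diagonals) on `k m` points,
which gives `a_k(n) ≤ k n / 3 + O(1)` along an arithmetic progression. Translates placed far
apart add their pattern counts, so `a_k` is subadditive, and Fekete's lemma provides the limit.
-/
open Finset Filter

instance (S : Finset (ℤ × ℤ)) (k : ℕ) (d p : ℤ × ℤ) : Decidable (IsPatternStart S k d p) :=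
  inferInstanceAs (Decidable (_ ∧ _ ∧ _))

def patternStarts (S : Finset (ℤ × ℤ)) (k : ℕ) (d : ℤ × ℤ) : Finset (ℤ × ℤ) :=
  {p ∈ S | IsPatternStart S k d p}

lemma IsPatternStart.mem {S : Finset (ℤ × ℤ)} {k : ℕ} {d p : ℤ × ℤ} (hk : 0 < k)
    (h : IsPatternStart S k d p) : p ∈ S := by
  simpa using h.1 0 hk

lemma patternCount_eq_sum (S : Finset (ℤ × ℤ)) {k : ℕ} (hk : 0 < k) :
    patternCount S k = ∑ d ∈ Dirs, #(patternStarts S k d) := by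
  have : {dp : (ℤ × ℤ) × (ℤ × ℤ) | dp.1 ∈ Dirs ∧ IsPatternStart S k dp.1 dp.2} =
      ↑{dp ∈ Dirs ×ˢ S | IsPatternStart S k dp.1 dp.2} := by
    ext ⟨d, p⟩
    simp only [Set.mem_ofPred_eq, coe_filter, mem_product]
    exact ⟨fun h => ⟨⟨h.1, h.2.mem hk⟩, h.2⟩, fun h => ⟨h.1.1, h.2⟩⟩
  rw [patternCount, this, Set.ncard_coe_finset, card_filter, sum_product]
  simp only [patternStarts, card_filter]

lemma IsPatternStart.le_of_add_smul_eq {S : Finset (ℤ × ℤ)} {k t t' : ℕ} {d p p' : ℤ × ℤ}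
    (h : IsPatternStart S k d p) (h' : IsPatternStart S k d p') (ht' : t' < k)
    (he : p + (t : ℤ) • d = p' + (t' : ℤ) • d) : t' ≤ t := by
  -- otherwise `p + (k + t - t') • d = p' + k • d` would lie both in `S` and outside it
  by_contra! htt
  refine h'.2.2 ?_
  have key : p + ((k + t - t' : ℕ) : ℤ) • d = p' + (k : ℤ) • d := by
    push_cast [show t' ≤ k + t by omega]
    linear_combination (norm := module) he
  rw [← key]
  exact h.1 _ (by omega)

lemma card_mul_card_patternStarts_le (S : Finset (ℤ × ℤ)) (k : ℕ) (d : ℤ × ℤ) :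
    k * #(patternStarts S k d) ≤ #S := by
  calc k * #(patternStarts S k d) = #(range k ×ˢ patternStarts S k d) := by
        rw [card_product, card_range]
    _ ≤ #S := by
      refine card_le_card_of_injOn (fun x => x.2 + (x.1 : ℤ) • d) ?_ ?_
      · rintro ⟨t, p⟩ h
        simp only [coe_product, Set.mem_prod, mem_coe, mem_range, patternStarts, mem_filter] at h
        exact h.2.2.1 t h.1
      · rintro ⟨t, p⟩ h ⟨t', p'⟩ h' he
        simp only [coe_product, Set.mem_prod, mem_coe, mem_range, patternStarts,
          mem_filter] at h h'
        have htt : t = t' := le_antisymm (h'.2.2.le_of_add_smul_eq h.2.2 h.1 he.symm)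
          (h.2.2.le_of_add_smul_eq h'.2.2 h'.1 he)
        subst htt
        simp only [Prod.mk.injEq, true_and]
        exact add_right_cancel he

lemma mul_patternCount_le (S : Finset (ℤ × ℤ)) {k : ℕ} (hk : 0 < k) :
    k * patternCount S k ≤ 4 * #S := by
  rw [patternCount_eq_sum S hk, mul_sum]
  calc ∑ d ∈ Dirs, k * #(patternStarts S k d) ≤ ∑ _d ∈ Dirs, #S :=
        sum_le_sum fun d _ => card_mul_card_patternStarts_le S k d
    _ = 4 * #S := by rw [sum_const, smul_eq_mul]; rfl

lemma isPatternStart_map_addRight_iff (S : Finset (ℤ × ℤ)) (k : ℕ) (d p v : ℤ × ℤ) :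
    IsPatternStart (S.map (addRightEmbedding v)) k d (p + v) ↔ IsPatternStart S k d p := by
  have hmem (q : ℤ × ℤ) : q + v ∈ S.map (addRightEmbedding v) ↔ q ∈ S :=
    mem_map' (addRightEmbedding v)
  simp only [IsPatternStart, add_right_comm p v, add_sub_right_comm p v, hmem]

lemma patternStarts_map_addRight (S : Finset (ℤ × ℤ)) (k : ℕ) (d v : ℤ × ℤ) :
    patternStarts (S.map (addRightEmbedding v)) k d =
      (patternStarts S k d).map (addRightEmbedding v) := by
  simp only [patternStarts, filter_map]
  congr 1
  exact filter_congr fun p _ => isPatternStart_map_addRight_iff S k d p v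

lemma patternCount_map_addRight (S : Finset (ℤ × ℤ)) {k : ℕ} (hk : 0 < k) (v : ℤ × ℤ) :
    patternCount (S.map (addRightEmbedding v)) k = patternCount S k := by
  simp only [patternCount_eq_sum _ hk, patternStarts_map_addRight, card_map]

lemma isPatternStart_union_iff_left {S T : Finset (ℤ × ℤ)} {k : ℕ} {d p : ℤ × ℤ}
    (hT : ∀ t : ℤ, -1 ≤ t → t ≤ k → p + t • d ∉ T) :
    IsPatternStart (S ∪ T) k d p ↔ IsPatternStart S k d p := by
  have hprev : p - d ∉ T := by simpa [← sub_eq_add_neg] using hT (-1) le_rfl (by omega)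
  have hnext : p + (k : ℤ) • d ∉ T := hT k (by omega) le_rfl
  simp only [IsPatternStart, mem_union, hprev, hnext, or_false]
  refine and_congr_left' (forall₂_congr fun t ht => or_iff_left (hT t (by omega) (by omega)))

lemma add_smul_notMem_of_far {S T : Finset (ℤ × ℤ)} {k : ℕ}
    (hST : ∀ p ∈ S, ∀ q ∈ T, (k : ℤ) < |p.1 - q.1|) {d p : ℤ × ℤ} (hd : d ∈ Dirs) (hp : p ∈ S)
    {t : ℤ} (ht : -1 ≤ t) (htk : t ≤ k) (hk : 0 < k) : p + t • d ∉ T := by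
  intro hq
  have := hST p hp _ hq
  simp only [Dirs, mem_insert, mem_singleton] at hd
  rcases hd with rfl | rfl | rfl | rfl <;> simp [lt_abs] at this <;> omega

lemma patternStarts_union {S T : Finset (ℤ × ℤ)} {k : ℕ} (hk : 0 < k)
    (hST : ∀ p ∈ S, ∀ q ∈ T, (k : ℤ) < |p.1 - q.1|) {d : ℤ × ℤ} (hd : d ∈ Dirs) :
    patternStarts (S ∪ T) k d = patternStarts S k d ∪ patternStarts T k d := by
  have hTS : ∀ q ∈ T, ∀ p ∈ S, (k : ℤ) < |q.1 - p.1| := fun q hq p hp => by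
    rw [abs_sub_comm]; exact hST p hp q hq
  ext p
  simp only [patternStarts, mem_filter, mem_union]
  by_cases hpS : p ∈ S
  · have hpT : p ∉ T := fun h => absurd (hST p hpS p h) (by simp)
    rw [isPatternStart_union_iff_left fun t ht htk =>
      add_smul_notMem_of_far hST hd hpS ht htk hk]
    tauto
  · by_cases hpT : p ∈ T
    · rw [union_comm, isPatternStart_union_iff_left fun t ht htk =>
        add_smul_notMem_of_far hTS hd hpT ht htk hk]
      tauto
    · tauto

lemma patternCount_union {S T : Finset (ℤ × ℤ)} {k : ℕ} (hk : 0 < k)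
    (hST : ∀ p ∈ S, ∀ q ∈ T, (k : ℤ) < |p.1 - q.1|) :
    patternCount (S ∪ T) k = patternCount S k + patternCount T k := by
  have hdisj : Disjoint S T := disjoint_left.2 fun p hpS hpT =>
    absurd (hST p hpS p hpT) (by simp)
  simp only [patternCount_eq_sum _ hk, ← sum_add_distrib]
  refine sum_congr rfl fun d hd => ?_
  rw [patternStarts_union hk hST hd]
  exact card_union_of_disjoint (disjoint_filter_filter hdisj)

lemma exists_far_translate (k : ℕ) (S T : Finset (ℤ × ℤ)) :
    ∃ v : ℤ × ℤ, ∀ p ∈ S, ∀ q ∈ T.map (addRightEmbedding v), (k : ℤ) < |p.1 - q.1| := by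
  obtain ⟨a, ha⟩ := (S.image Prod.fst).bddAbove
  obtain ⟨b, hb⟩ := (T.image Prod.fst).bddBelow
  refine ⟨(a - b + k + 1, 0), fun p hp q hq => ?_⟩
  obtain ⟨q₀, hq₀, rfl⟩ := mem_map.1 hq
  have hpa := ha (mem_image_of_mem _ hp)
  have hqb := hb (mem_image_of_mem _ hq₀)
  rw [abs_sub_comm, lt_abs]
  left
  simp only [addRightEmbedding_apply, Prod.fst_add]
  linarith

lemma exists_patternCount_union_translate (S T : Finset (ℤ × ℤ)) {k : ℕ} (hk : 0 < k) :
    ∃ v : ℤ × ℤ, patternCount (S ∪ T.map (addRightEmbedding v)) k =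
      patternCount S k + patternCount T k := by
  obtain ⟨v, hv⟩ := exists_far_translate k S T
  exact ⟨v, by rw [patternCount_union hk hv, patternCount_map_addRight T hk]⟩

noncomputable def grid (k m : ℕ) : Finset (ℤ × ℤ) :=
  Ico 0 (k : ℤ) ×ˢ Ico 0 (m : ℤ)

lemma mem_grid {k m : ℕ} {p : ℤ × ℤ} :
    p ∈ grid k m ↔ 0 ≤ p.1 ∧ p.1 < k ∧ 0 ≤ p.2 ∧ p.2 < m := by
  simp [grid, and_assoc]

lemma card_grid (k m : ℕ) : #(grid k m) = k * m := by
  simp [grid]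

lemma isPatternStart_grid_iff {k m : ℕ} (hk : 0 < k) {e : ℤ} (he : e = 0 ∨ e = 1 ∨ e = -1)
    (p : ℤ × ℤ) :
    IsPatternStart (grid k m) k (1, e) p ↔
      p.1 = 0 ∧ 0 ≤ p.2 ∧ p.2 < m ∧ 0 ≤ p.2 + (k - 1) * e ∧ p.2 + (k - 1) * e < m := by
  simp only [IsPatternStart, mem_grid, Prod.fst_add, Prod.snd_add, Prod.fst_sub, Prod.snd_sub,
    Prod.smul_fst, Prod.smul_snd, smul_eq_mul, mul_one]
  constructor
  · rintro ⟨h, -, -⟩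
    have h₀ := h 0 hk
    have h₁ := h (k - 1) (by omega)
    push_cast [Nat.one_le_of_lt hk] at h₀ h₁
    omega
  · rintro ⟨h₁, h₂, h₃, h₄, h₅⟩
    refine ⟨fun t ht => ?_, by omega, by omega⟩
    rcases he with rfl | rfl | rfl <;> simp <;> omega

lemma isPatternStart_grid_vertical {k m : ℕ} (hk : 0 < k) {p : ℤ × ℤ}
    (h : IsPatternStart (grid k m) k (0, 1) p) : m = k := by
  obtain ⟨h, hprev, hnext⟩ := h
  have h₀ := h 0 hk
  have h₁ := h (k - 1) (by omega)
  simp only [mem_grid, Prod.fst_add, Prod.snd_add, Prod.fst_sub, Prod.snd_sub,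
    Prod.smul_fst, Prod.smul_snd, smul_eq_mul] at h₀ h₁ hprev hnext
  push_cast [Nat.one_le_of_lt hk] at h₀ h₁
  omega

lemma patternStarts_grid_horizontal {k m : ℕ} (hk : 0 < k) :
    patternStarts (grid k m) k (1, 0) = {0} ×ˢ Ico 0 (m : ℤ) := by
  ext p
  simp only [patternStarts, mem_filter, isPatternStart_grid_iff hk (Or.inl rfl), mem_grid,
    mem_product, mem_singleton, mem_Ico]
  omega

lemma patternStarts_grid_diagonal {k m : ℕ} (hk : 0 < k) :
    patternStarts (grid k m) k (1, 1) = {0} ×ˢ Ico 0 ((m : ℤ) + 1 - k) := by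
  ext p
  simp only [patternStarts, mem_filter, isPatternStart_grid_iff hk (Or.inr (Or.inl rfl)), mem_grid,
    mem_product, mem_singleton, mem_Ico]
  omega

lemma patternStarts_grid_antidiagonal {k m : ℕ} (hk : 0 < k) :
    patternStarts (grid k m) k (1, -1) = {0} ×ˢ Ico ((k : ℤ) - 1) m := by
  ext p
  simp only [patternStarts, mem_filter, isPatternStart_grid_iff hk (Or.inr (Or.inr rfl)), mem_grid,
    mem_product, mem_singleton, mem_Ico]
  omega

lemma patternStarts_grid_vertical {k m : ℕ} (hk : 0 < k) (hm : m ≠ k) :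
    patternStarts (grid k m) k (0, 1) = ∅ :=
  filter_false_of_mem fun _ _ h => hm (isPatternStart_grid_vertical hk h)

-- `m + 1 - k` truncates to `0` when `m < k`, matching the absence of diagonal patterns.
lemma patternCount_grid {k m : ℕ} (hk : 0 < k) (hm : m ≠ k) :
    patternCount (grid k m) k = m + 2 * (m + 1 - k) := by
  rw [patternCount_eq_sum _ hk, Dirs, sum_insert (by decide), sum_insert (by decide),
    sum_pair (by decide), patternStarts_grid_horizontal hk, patternStarts_grid_vertical hk hm,
    patternStarts_grid_diagonal hk, patternStarts_grid_antidiagonal hk]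
  simp only [card_product, card_singleton, Int.card_Ico, card_empty]
  omega

lemma patternCount_row {k : ℕ} (hk : 2 ≤ k) : patternCount (grid k 1) k = 1 := by
  rw [patternCount_grid (by omega) (by omega)]
  omega

lemma exists_patternCount_eq {k : ℕ} (hk : 2 ≤ k) (n : ℕ) :
    ∃ S : Finset (ℤ × ℤ), patternCount S k = n := by
  induction n with
  | zero => exact ⟨∅, by simp [patternCount_eq_sum _ (by omega : 0 < k), patternStarts]⟩
  | succ n ih =>
    obtain ⟨S, hS⟩ := ih
    obtain ⟨v, hv⟩ := exists_patternCount_union_translate S (grid k 1) (by omega : 0 < k)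
    exact ⟨_, by rw [hv, hS, patternCount_row hk]⟩

lemma exists_card_eq_minPoints {k : ℕ} (hk : 2 ≤ k) (n : ℕ) :
    ∃ S : Finset (ℤ × ℤ), patternCount S k = n ∧ #S = minPoints k n := by
  obtain ⟨S, hS⟩ := exists_patternCount_eq hk n
  exact Nat.sInf_mem (s := {c | ∃ S : Finset (ℤ × ℤ), patternCount S k = n ∧ #S = c})
    ⟨#S, S, hS, rfl⟩

lemma minPoints_le_card {k n : ℕ} {S : Finset (ℤ × ℤ)} (hS : patternCount S k = n) :
    minPoints k n ≤ #S :=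
  Nat.sInf_le ⟨S, hS, rfl⟩

lemma minPoints_add_le {k : ℕ} (hk : 2 ≤ k) (a b : ℕ) :
    minPoints k (a + b) ≤ minPoints k a + minPoints k b := by
  obtain ⟨S, hSa, hS⟩ := exists_card_eq_minPoints hk a
  obtain ⟨T, hTb, hT⟩ := exists_card_eq_minPoints hk b
  obtain ⟨v, hv⟩ := exists_patternCount_union_translate S T (by omega : 0 < k)
  calc minPoints k (a + b) ≤ #(S ∪ T.map (addRightEmbedding v)) :=
        minPoints_le_card (by rw [hv, hSa, hTb])
    _ ≤ #S + #(T.map (addRightEmbedding v)) := card_union_le _ _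
    _ = minPoints k a + minPoints k b := by rw [card_map, hS, hT]

lemma mul_le_four_mul_minPoints {k : ℕ} (hk : 2 ≤ k) (n : ℕ) :
    k * n ≤ 4 * minPoints k n := by
  obtain ⟨S, hSn, hS⟩ := exists_card_eq_minPoints hk n
  rw [← hS, ← hSn]
  exact mul_patternCount_le S (by omega)

lemma minPoints_le_of_grid {k : ℕ} (hk : 0 < k) (j : ℕ) :
    minPoints k (3 * j + k + 5) ≤ k * (j + k + 1) := by
  have hcount : patternCount (grid k (j + k + 1)) k = 3 * j + k + 5 := by
    rw [patternCount_grid (by omega) (by omega)]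
    omega
  simpa [card_grid] using minPoints_le_card hcount

lemma minPoints_div_le {k : ℕ} (hk : 0 < k) (j : ℕ) :
    (minPoints k (3 * j + k + 5) : ℝ) / ↑(3 * j + k + 5) ≤
      k / 3 + 2 * k * (k - 1) / 3 / ↑(3 * j + k + 5) := by
  have h : (minPoints k (3 * j + k + 5) : ℝ) ≤ k * (j + k + 1) := by
    exact_mod_cast minPoints_le_of_grid hk j
  have hn : (0 : ℝ) < ↑(3 * j + k + 5) := by positivity
  rw [div_le_iff₀ hn, add_mul, div_mul_cancel₀ _ hn.ne']
  push_cast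
  linarith

lemma subadditive_minPoints {k : ℕ} (hk : 2 ≤ k) : Subadditive (fun n => (minPoints k n : ℝ)) :=
  fun a b => by
    dsimp only
    exact_mod_cast minPoints_add_le hk a b

theorem stmt6 (k : ℕ) (hk : 2 ≤ k) :
    ∃ L : ℝ, Tendsto (fun n : ℕ => (minPoints k n : ℝ) / n) atTop (nhds L) ∧
      (k : ℝ) / 4 ≤ L ∧ L ≤ (k : ℝ) / 3 := by
  have hsub := subadditive_minPoints hk
  have hlim := hsub.tendsto_lim ⟨0, by rintro _ ⟨n, rfl⟩; positivity⟩
  refine ⟨hsub.lim, hlim, ge_of_tendsto hlim ?_, ?_⟩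
  · filter_upwards [eventually_gt_atTop 0] with n hn
    have h : (k : ℝ) * n ≤ 4 * minPoints k n := by exact_mod_cast mul_le_four_mul_minPoints hk n
    rw [div_le_div_iff₀ (by norm_num) (by exact_mod_cast hn)]
    linarith
  · have hφ : Tendsto (fun j : ℕ => 3 * j + k + 5) atTop atTop :=
      StrictMono.tendsto_atTop fun a b h => by omega
    have hbound := (tendsto_const_nhds (x := (k : ℝ) / 3)).add
      (tendsto_const_div_atTop_nhds_zero_nat (2 * k * (k - 1) / 3 : ℝ))
    rw [add_zero] at hbound
    exact le_of_tendsto_of_tendsto' (hlim.comp hφ) (hbound.comp hφ)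
      (minPoints_div_le (by omega))
end
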